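/- arXiv:2605.18528 — 5 statements merged into one kernel-verified Lean document; each statement's English description precedes it below -/
import Mathlib

section
/- Suppose F : R^{m×n} → R is differentiable and satisfies the generalized smoothness condition ‖∇F(Y) − ∇F(X)‖_* ≤ (L₀ + L₁‖∇F(X)‖_*)‖Y − X‖ whenever ‖Y − X‖ ≤ 1/L₁. Then for any X, Y with ‖Y − X‖ ≤ 1/L₁, F(Y) ≤ F(X) + ⟨∇F(X), Y − X⟩ + ((L₀ + L₁‖∇F(X)‖_*)/2)·‖Y − X‖². -/
/-- Generalized-smoothness descent inequality: if `F` has gradient `gradF` and satisfies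
`‖∇F(Y) − ∇F(X)‖_* ≤ (L₀ + L₁‖∇F(X)‖_*)‖Y − X‖` whenever `‖Y − X‖ ≤ 1/L₁`
(encoded as `L₁·‖Y−X‖ ≤ 1`, which also covers the convention `1/L₁ = +∞` for `L₁ = 0`),
then the quadratic upper bound holds.  Here `Nn` is the primal norm on `ℝ^{m×n}`,
`Ns` the dual norm, and the trace inner product is the Euclidean inner product. -/
theorem generalized_smooth_descent (m n : ℕ)
    (Nn Ns : EuclideanSpace ℝ (Fin m × Fin n) → ℝ)
    (F : EuclideanSpace ℝ (Fin m × Fin n) → ℝ)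
    (gradF : EuclideanSpace ℝ (Fin m × Fin n) → EuclideanSpace ℝ (Fin m × Fin n))
    (L0 L1 : ℝ) (hL0 : 0 ≤ L0) (hL1 : 0 ≤ L1)
    (hgrad : ∀ X, HasGradientAt F (gradF X) X)
    (hNn_nonneg : ∀ A, 0 ≤ Nn A)
    (hNn_hom : ∀ (c : ℝ) A, Nn (c • A) = |c| * Nn A)
    (hdual : ∀ A B, (inner ℝ A B : ℝ) ≤ Ns A * Nn B)
    (hsmooth : ∀ X Y, L1 * Nn (Y - X) ≤ 1 →
      Ns (gradF Y - gradF X) ≤ (L0 + L1 * Ns (gradF X)) * Nn (Y - X))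
    (X Y : EuclideanSpace ℝ (Fin m × Fin n)) (hXY : L1 * Nn (Y - X) ≤ 1) :
    F Y ≤ F X + (inner ℝ (gradF X) (Y - X) : ℝ) +
        ((L0 + L1 * Ns (gradF X)) / 2) * (Nn (Y - X)) ^ 2 := by
  set v := Y - X with hv
  set C := L0 + L1 * Ns (gradF X) with hC
  set φ : ℝ → ℝ := fun t =>
    F (X + t • v) - t * (inner ℝ (gradF X) v : ℝ) - t ^ 2 * (C / 2 * Nn v ^ 2) with hφ
  have hline : ∀ t : ℝ, HasDerivAt (fun s : ℝ => X + s • v) v t := by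
    intro t
    simpa using ((hasDerivAt_id t).smul_const v).const_add X
  have hφ' : ∀ t : ℝ, HasDerivAt φ
      ((inner ℝ (gradF (X + t • v)) v : ℝ) - (inner ℝ (gradF X) v : ℝ)
        - 2 * t * (C / 2 * Nn v ^ 2)) t := by
    intro t
    have h1 : HasDerivAt (fun s : ℝ => F (X + s • v))
        ((inner ℝ (gradF (X + t • v)) v : ℝ)) t := by
      have := ((hgrad (X + t • v)).hasFDerivAt).comp_hasDerivAt t (hline t)
      exact this
    have h2 : HasDerivAt (fun s : ℝ => s * (inner ℝ (gradF X) v : ℝ))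
        ((inner ℝ (gradF X) v : ℝ)) t := by
      simpa using (hasDerivAt_id t).mul_const ((inner ℝ (gradF X) v : ℝ))
    have h3 : HasDerivAt (fun s : ℝ => s ^ 2 * (C / 2 * Nn v ^ 2))
        (2 * t * (C / 2 * Nn v ^ 2)) t := by
      simpa [mul_comm] using (hasDerivAt_pow 2 t).mul_const (C / 2 * Nn v ^ 2)
    exact (h1.sub h2).sub h3
  have hderiv_le : ∀ t ∈ Set.Icc (0:ℝ) 1, deriv φ t ≤ 0 := by
    intro t ht
    rw [(hφ' t).deriv]
    have ht0 := ht.1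
    have ht1 := ht.2
    have hsm : Ns (gradF (X + t • v) - gradF X) ≤ C * Nn (X + t • v - X) := by
      apply hsmooth
      have : X + t • v - X = t • v := by abel
      rw [this, hNn_hom, abs_of_nonneg ht0]
      calc L1 * (t * Nn v) ≤ L1 * (1 * Nn v) := by
            apply mul_le_mul_of_nonneg_left _ hL1
            exact mul_le_mul_of_nonneg_right ht1 (hNn_nonneg v)
        _ = L1 * Nn v := by ring
        _ ≤ 1 := hXY
    have heq : X + t • v - X = t • v := by abel
    rw [heq, hNn_hom, abs_of_nonneg ht0] at hsm
    have hinner : (inner ℝ (gradF (X + t • v)) v : ℝ) - (inner ℝ (gradF X) v : ℝ)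
        ≤ C * (t * Nn v) * Nn v := by
      calc (inner ℝ (gradF (X + t • v)) v : ℝ) - (inner ℝ (gradF X) v : ℝ)
          = (inner ℝ (gradF (X + t • v) - gradF X) v : ℝ) := by rw [inner_sub_left]
        _ ≤ Ns (gradF (X + t • v) - gradF X) * Nn v := hdual _ _
        _ ≤ C * (t * Nn v) * Nn v :=
            mul_le_mul_of_nonneg_right hsm (hNn_nonneg v)
    have h2t : 2 * t * (C / 2 * Nn v ^ 2) = C * (t * Nn v) * Nn v := by ring
    rw [h2t]
    linarith
  have hcont : ContinuousOn φ (Set.Icc 0 1) :=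
    fun t _ => ((hφ' t).continuousAt).continuousWithinAt
  have hdiff : DifferentiableOn ℝ φ (interior (Set.Icc (0:ℝ) 1)) :=
    fun t _ => ((hφ' t).differentiableAt).differentiableWithinAt
  have hanti : AntitoneOn φ (Set.Icc 0 1) := by
    apply antitoneOn_of_deriv_nonpos (convex_Icc 0 1) hcont hdiff
    intro t ht
    exact hderiv_le t (interior_subset ht)
  have h01 : φ 1 ≤ φ 0 :=
    hanti (Set.mem_Icc.mpr ⟨le_refl 0, zero_le_one⟩)
      (Set.mem_Icc.mpr ⟨zero_le_one, le_refl 1⟩) zero_le_one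
  have hY : X + (1:ℝ) • v = Y := by rw [one_smul, hv]; abel
  have hX : X + (0:ℝ) • v = X := by rw [zero_smul, add_zero]
  simp only [hφ, hY, hX, one_pow, one_mul, zero_mul, sub_zero,
    mul_zero, zero_smul, add_zero] at h01
  linarith
end

section
/- Let V be a finite-dimensional Euclidean space, u ∈ V with ‖u‖ ≤ 1, and S⁽⁰⁾ ⊆ S⁽¹⁾ ⊆ … ⊆ S⁽ᴺ⁾ a nested chain of subspaces with u ⟂ S⁽⁰⁾. Let Π⁽ʳ⁾ be the orthogonal projection onto S⁽ʳ⁾ and P⁽ʳ⁾ = I − Π⁽ʳ⁾. If ‖Π⁽ᵃ⁾P⁽ᵃ⁻¹⁾u‖ < 1/(4R√N) for all a ≤ s, then for every r ≤ s and x ∈ S⁽ʳ⁾, |⟨u, x⟩| < ‖x‖·√(r/N)/(4R). -/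
open Submodule

lemma proj_step_sq {V : Type*} [NormedAddCommGroup V]
    [InnerProductSpace ℝ V] [FiniteDimensional ℝ V]
    (K L : Submodule ℝ V) (hKL : K ≤ L) (u : V) :
    ‖(orthogonalProjection L u : V)‖ ^ 2 =
      ‖(orthogonalProjection K u : V)‖ ^ 2 +
      ‖(orthogonalProjection L (u - (orthogonalProjection K u : V)) : V)‖ ^ 2 := by
  set p : V := (orthogonalProjection K u : V) with hp
  set q : V := (orthogonalProjection L (u - p) : V) with hq
  have hpL : p ∈ L := hKL (orthogonalProjection K u).2
  have h2 : (orthogonalProjection L p : V) = p := starProjection_eq_self_iff.mpr hpL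
  have hdecomp : (orthogonalProjection L u : V) = p + q := by
    have h3 : (orthogonalProjection L (u - p) : V) =
        (orthogonalProjection L u : V) - p := by
      rw [map_sub]; push_cast; rw [h2]
    rw [hq, h3]; abel
  have hpq : (inner ℝ p q : ℝ) = 0 := by
    have h1 : (inner ℝ p q : ℝ) = inner ℝ ((orthogonalProjection L p : V)) (u - p) := by
      rw [hq]; exact (inner_starProjection_left_eq_right L p (u - p)).symm
    rw [h1, h2, real_inner_comm]
    exact starProjection_inner_eq_zero u p (orthogonalProjection K u).2
  rw [hdecomp, norm_add_sq_real, hpq]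
  ring

/-- Nested-chain projection estimate: if `u ⟂ S⁰`, `‖u‖ ≤ 1`, and the leakage
`‖Π⁽ᵃ⁾ P⁽ᵃ⁻¹⁾ u‖ < 1/(4R√N)` for every `1 ≤ a ≤ s`, then for every `1 ≤ r ≤ s` and
every nonzero `x ∈ S⁽ʳ⁾` we have `|⟨u,x⟩| < ‖x‖ √(r/N)/(4R)`. -/
theorem nested_projection_leakage {V : Type*} [NormedAddCommGroup V]
    [InnerProductSpace ℝ V] [FiniteDimensional ℝ V]
    (R : ℝ) (hR : 0 < R) (N : ℕ) (hN : 1 ≤ N)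
    (S : ℕ → Submodule ℝ V) (hnest : ∀ i, S i ≤ S (i + 1))
    (u : V) (hu : ‖u‖ ≤ 1) (hu0 : u ∈ (S 0)ᗮ) (s : ℕ)
    (hleak : ∀ a, 1 ≤ a → a ≤ s →
      ‖(orthogonalProjection (S a) (u - (orthogonalProjection (S (a - 1)) u : V)) : V)‖
        < 1 / (4 * R * Real.sqrt N)) :
    ∀ r, 1 ≤ r → r ≤ s → ∀ x ∈ S r, x ≠ 0 →
      |(inner ℝ u x : ℝ)| < ‖x‖ * Real.sqrt ((r : ℝ) / N) / (4 * R) := by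
  set c : ℝ := 1 / (4 * R * Real.sqrt N) with hc
  have hNpos : (0:ℝ) < Real.sqrt N := Real.sqrt_pos.mpr (by positivity)
  have hcpos : 0 < c := by positivity
  -- main estimate by induction
  have key : ∀ r, 1 ≤ r → r ≤ s →
      ‖(orthogonalProjection (S r) u : V)‖ ^ 2 < (r : ℝ) * c ^ 2 := by
    intro r hr1 hrs
    induction r with
    | zero => omega
    | succ b ih =>
      have hstep := proj_step_sq (S b) (S (b+1)) (hnest b) u
      have hleakb : ‖(orthogonalProjection (S (b+1))
          (u - (orthogonalProjection (S b) u : V)) : V)‖ < c :=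
        hleak (b+1) (by omega) hrs
      have hleaksq : ‖(orthogonalProjection (S (b+1))
          (u - (orthogonalProjection (S b) u : V)) : V)‖ ^ 2 < c ^ 2 := by
        nlinarith [hleakb, norm_nonneg ((orthogonalProjection (S (b+1))
          (u - (orthogonalProjection (S b) u : V)) : V))]
      rcases Nat.eq_zero_or_pos b with hb0 | hbpos
      · subst hb0
        have h0 : (orthogonalProjection (S 0) u : V) = 0 := by
          simp [orthogonalProjection_mem_subspace_orthogonalComplement_eq_zero hu0]
        rw [h0] at hleaksq
        rw [hstep, h0]
        simp only [norm_zero, sub_zero] at hleaksq ⊢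
        push_cast
        nlinarith [hleaksq]
      · have ihb := ih (by omega) (by omega)
        rw [hstep]
        push_cast
        calc ‖(orthogonalProjection (S b) u : V)‖ ^ 2 +
              ‖(orthogonalProjection (S (b+1))
                (u - (orthogonalProjection (S b) u : V)) : V)‖ ^ 2
            < (b : ℝ) * c ^ 2 + c ^ 2 := by
              exact add_lt_add ihb hleaksq
          _ = ((b : ℝ) + 1) * c ^ 2 := by ring
  intro r hr1 hrs x hx hx0
  have hxpos : 0 < ‖x‖ := norm_pos_iff.mpr hx0
  have hkey := key r hr1 hrs
  -- |⟨u,x⟩| = |⟨Πʳu,x⟩|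
  have heq : (inner ℝ u x : ℝ) = inner ℝ ((orthogonalProjection (S r) u : V)) x := by
    have h0 : (inner ℝ (u - (orthogonalProjection (S r) u : V)) x : ℝ) = 0 :=
      starProjection_inner_eq_zero u x hx
    rw [inner_sub_left] at h0
    linarith
  have hbound : ‖(orthogonalProjection (S r) u : V)‖ < Real.sqrt r * c := by
    have hsq : (Real.sqrt r * c) ^ 2 = (r : ℝ) * c ^ 2 := by
      rw [mul_pow, Real.sq_sqrt (by positivity)]
    nlinarith [norm_nonneg ((orthogonalProjection (S r) u : V)),
      mul_pos (Real.sqrt_pos.mpr (by exact_mod_cast Nat.pos_of_ne_zero (by omega) : (0:ℝ) < r)) hcpos]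
  have habs : |(inner ℝ u x : ℝ)| ≤ ‖(orthogonalProjection (S r) u : V)‖ * ‖x‖ := by
    rw [heq]; exact abs_real_inner_le_norm _ _
  have hfinal : ‖x‖ * Real.sqrt ((r : ℝ) / N) / (4 * R) = Real.sqrt r * c * ‖x‖ := by
    rw [hc, Real.sqrt_div (by positivity : (0:ℝ) ≤ (r:ℝ))]
    field_simp
  rw [hfinal]
  calc |(inner ℝ u x : ℝ)| ≤ ‖(orthogonalProjection (S r) u : V)‖ * ‖x‖ := habs
    _ < Real.sqrt r * c * ‖x‖ := by
        exact mul_lt_mul_of_pos_right hbound hxpos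
end

section
/- Let h(z) = φ(Uᵀρ_R(z)) + (η/2)‖z‖², where φ : R^T → R has ℓ-Lipschitz gradient with ‖∇φ‖_∞ ≤ G (hence ‖∇φ‖₂ ≤ G√T), U ∈ R^{n×T} has orthonormal columns, and ρ_R is the soft projection with Jacobian J_R. Then ∇h is Lipschitz with constant at most ℓ + 6G√T/R + η. -/
/-- The soft projection `ρ_R(z) = z / √(1 + ‖z‖²/R²)`. -/
noncomputable def softProj (R : ℝ) {d : ℕ} (z : EuclideanSpace ℝ (Fin d)) :
    EuclideanSpace ℝ (Fin d) :=
  (Real.sqrt (1 + ‖z‖ ^ 2 / R ^ 2))⁻¹ • z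

/-- The Jacobian `J_R(z) = s⁻¹ I − s⁻³ z zᵀ / R²` of the soft projection,
where `s = √(1 + ‖z‖²/R²)`. -/
noncomputable def softJac (R : ℝ) {d : ℕ} (z : EuclideanSpace ℝ (Fin d)) :
    Matrix (Fin d) (Fin d) ℝ :=
  (Real.sqrt (1 + ‖z‖ ^ 2 / R ^ 2))⁻¹ • (1 : Matrix (Fin d) (Fin d) ℝ) -
    ((Real.sqrt (1 + ‖z‖ ^ 2 / R ^ 2))⁻¹ ^ 3 / R ^ 2) • Matrix.of (fun i j => z i * z j)

/-- The gradient `∇h(z) = J_R(z)ᵀ U ∇φ(Uᵀ ρ_R(z)) + η z` of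
`h(z) = φ(Uᵀ ρ_R(z)) + (η/2)‖z‖²`. -/
noncomputable def softCompGrad (T n : ℕ) (R η : ℝ) (U : Matrix (Fin n) (Fin T) ℝ)
    (gφ : EuclideanSpace ℝ (Fin T) → EuclideanSpace ℝ (Fin T))
    (z : EuclideanSpace ℝ (Fin n)) : EuclideanSpace ℝ (Fin n) :=
  (WithLp.equiv 2 (Fin n → ℝ)).symm
      ((softJac R z).transpose.mulVec (U.mulVec (WithLp.equiv 2 (Fin T → ℝ)
        (gφ ((WithLp.equiv 2 (Fin T → ℝ)).symm
          (U.transpose.mulVec (WithLp.equiv 2 (Fin n → ℝ) (softProj R z))))))))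
    + η • z

open scoped RealInnerProductSpace Matrix

noncomputable def sFun (R : ℝ) {d : ℕ} (z : EuclideanSpace ℝ (Fin d)) : ℝ :=
  Real.sqrt (1 + ‖z‖ ^ 2 / R ^ 2)

noncomputable def Jv (R : ℝ) {d : ℕ} (z w : EuclideanSpace ℝ (Fin d)) :
    EuclideanSpace ℝ (Fin d) :=
  (sFun R z)⁻¹ • w - (((sFun R z)⁻¹ ^ 3 / R ^ 2) * ⟪z, w⟫) • z

variable {d : ℕ} {R : ℝ}

lemma softJac_transpose_mulVec {d : ℕ} (R : ℝ) (z : EuclideanSpace ℝ (Fin d)) (v : Fin d → ℝ) :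
    (WithLp.equiv 2 (Fin d → ℝ)).symm ((softJac R z).transpose.mulVec v)
      = Jv R z ((WithLp.equiv 2 (Fin d → ℝ)).symm v) := by
  apply PiLp.ext
  intro i
  simp [softJac, Jv, sFun, Matrix.mulVec, dotProduct, Matrix.transpose_apply,
    Matrix.sub_apply, Matrix.smul_apply, Matrix.one_apply, PiLp.inner_apply,
    sub_mul, Finset.sum_sub_distrib, Finset.mul_sum, mul_ite, Finset.sum_ite_eq,
    PiLp.sub_apply, PiLp.smul_apply, smul_eq_mul]
  ring_nf
  rw [Finset.mul_sum]; apply Finset.sum_congr rfl; intro j _; ring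

lemma sFun_sq (hR : R ≠ 0) (z : EuclideanSpace ℝ (Fin d)) :
    (sFun R z) ^ 2 = 1 + ‖z‖ ^ 2 / R ^ 2 := by
  rw [sFun, Real.sq_sqrt]
  have : 0 ≤ ‖z‖ ^ 2 / R ^ 2 := by positivity
  linarith

lemma sFun_one_le (hR : R ≠ 0) (z : EuclideanSpace ℝ (Fin d)) : 1 ≤ sFun R z := by
  have h2 := sFun_sq hR z
  have h0 : 0 ≤ sFun R z := Real.sqrt_nonneg _
  have : 0 ≤ ‖z‖ ^ 2 / R ^ 2 := by positivity
  nlinarith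

lemma norm_sq_eq (hR : 0 < R) (z : EuclideanSpace ℝ (Fin d)) :
    ‖z‖ ^ 2 = R ^ 2 * ((sFun R z) ^ 2 - 1) := by
  have h2 := sFun_sq hR.ne' z
  field_simp at h2; nlinarith

lemma le_of_sq_le_sq' {a b : ℝ} (hb : 0 ≤ b) (h : a ^ 2 ≤ b ^ 2) : a ≤ b := by
  nlinarith [sq_nonneg (a - b), sq_nonneg (a + b)]

lemma Jv_sub (z x y : EuclideanSpace ℝ (Fin d)) :
    Jv R z x - Jv R z y = Jv R z (x - y) := by
  simp only [Jv, inner_sub_right]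
  module

lemma Jv_norm_le (hR : 0 < R) (z w : EuclideanSpace ℝ (Fin d)) : ‖Jv R z w‖ ≤ ‖w‖ := by
  have h1 := sFun_one_le hR.ne' z
  have hs0 : (0:ℝ) < sFun R z := lt_of_lt_of_le one_pos h1
  have h2' : ‖z‖ ^ 2 = R ^ 2 * ((sFun R z) ^ 2 - 1) := norm_sq_eq hR z
  set s := sFun R z with hs
  set t := s⁻¹ with htdef
  have ht0 : 0 < t := by positivity
  have ht1 : t ≤ 1 := inv_le_one_of_one_le₀ h1
  have hst : s * t = 1 := mul_inv_cancel₀ hs0.ne'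
  have hst2 : s ^ 2 * t ^ 2 = 1 := by nlinarith
  have hz : ‖z‖ ^ 2 * t ^ 2 = R ^ 2 * (1 - t ^ 2) := by
    rw [h2']; linear_combination R ^ 2 * hst2
  set p : ℝ := ⟪z, w⟫ with hp
  have hexp : ‖Jv R z w‖ ^ 2
      = t ^ 2 * ‖w‖ ^ 2 - 2 * t ^ 4 / R ^ 2 * p ^ 2 + (t ^ 3 / R ^ 2) ^ 2 * p ^ 2 * ‖z‖ ^ 2 := by
    rw [Jv, norm_sub_sq_real, real_inner_smul_left, real_inner_smul_right,
      norm_smul, norm_smul]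
    have hwz : (inner ℝ w z : ℝ) = p := by rw [hp]; exact real_inner_comm z w
    simp only [← hs, ← htdef, Real.norm_eq_abs, mul_pow, sq_abs, hwz, ← hp]
    ring
  have key : (t ^ 3 / R ^ 2) ^ 2 * p ^ 2 * ‖z‖ ^ 2 = t ^ 4 * p ^ 2 * (1 - t ^ 2) / R ^ 2 := by
    calc (t ^ 3 / R ^ 2) ^ 2 * p ^ 2 * ‖z‖ ^ 2 = t ^ 4 * p ^ 2 * (‖z‖ ^ 2 * t ^ 2) / R ^ 4 := by ring
    _ = t ^ 4 * p ^ 2 * (R ^ 2 * (1 - t ^ 2)) / R ^ 4 := by rw [hz]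
    _ = (R ^ 2 * (t ^ 4 * p ^ 2 * (1 - t ^ 2))) / (R ^ 2 * R ^ 2) := by ring
    _ = t ^ 4 * p ^ 2 * (1 - t ^ 2) / R ^ 2 := mul_div_mul_left _ _ (by positivity)
  apply le_of_sq_le_sq' (norm_nonneg _)
  rw [hexp, key]
  have ht2 : t ^ 2 ≤ 1 := by nlinarith
  have e1 : t ^ 2 * ‖w‖ ^ 2 ≤ ‖w‖ ^ 2 := by nlinarith [sq_nonneg ‖w‖]
  have e2 : t ^ 4 * p ^ 2 * (1 - t ^ 2) / R ^ 2 - 2 * t ^ 4 / R ^ 2 * p ^ 2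
      = -(t ^ 4 * p ^ 2 * (1 + t ^ 2) / R ^ 2) := by ring
  have e3 : 0 ≤ t ^ 4 * p ^ 2 * (1 + t ^ 2) / R ^ 2 := by positivity
  linarith

lemma norm_le_sFun (hR : 0 < R) (z : EuclideanSpace ℝ (Fin d)) : ‖z‖ ≤ R * sFun R z := by
  have h1 := sFun_one_le hR.ne' z
  have h2 := sFun_sq hR.ne' z
  have h3 : ‖z‖ ^ 2 = R ^ 2 * (sFun R z) ^ 2 - R ^ 2 := by
    field_simp at h2; nlinarith
  nlinarith [norm_nonneg z, mul_pos hR (lt_of_lt_of_le one_pos h1)]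


lemma sFun_mul_ge (hR : 0 < R) (z z' : EuclideanSpace ℝ (Fin d)) :
    1 + ‖z‖ * ‖z'‖ / R ^ 2 ≤ sFun R z * sFun R z' := by
  rw [sFun, sFun, ← Real.sqrt_mul (by positivity)]
  rw [show (1 + ‖z‖ * ‖z'‖ / R ^ 2) = Real.sqrt ((1 + ‖z‖ * ‖z'‖ / R ^ 2) ^ 2) from
    (Real.sqrt_sq (by positivity)).symm]
  apply Real.sqrt_le_sqrt
  have hid : (1 + ‖z‖ ^ 2 / R ^ 2) * (1 + ‖z'‖ ^ 2 / R ^ 2) - (1 + ‖z‖ * ‖z'‖ / R ^ 2) ^ 2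
      = ((‖z‖ - ‖z'‖) / R) ^ 2 := by field_simp; ring
  linarith [sq_nonneg ((‖z‖ - ‖z'‖) / R)]

set_option maxHeartbeats 1000000 in
lemma softProj_lip (hR : 0 < R) (z z' : EuclideanSpace ℝ (Fin d)) :
    ‖softProj R z - softProj R z'‖ ≤ ‖z - z'‖ := by
  have h1 : 1 ≤ sFun R z := sFun_one_le hR.ne' z
  have h1' : 1 ≤ sFun R z' := sFun_one_le hR.ne' z'
  have hs0 : (0:ℝ) < sFun R z := lt_of_lt_of_le one_pos h1
  have hs0' : (0:ℝ) < sFun R z' := lt_of_lt_of_le one_pos h1'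
  have d3 : (sFun R z) ^ 2 = 1 + ‖z‖ ^ 2 / R ^ 2 := sFun_sq hR.ne' z
  have d4 : (sFun R z') ^ 2 = 1 + ‖z'‖ ^ 2 / R ^ 2 := sFun_sq hR.ne' z'
  have d5 := sFun_mul_ge hR z z'
  set a := ‖z‖ with ha
  set b := ‖z'‖ with hb
  set s := sFun R z with hs
  set s' := sFun R z' with hs'
  set q : ℝ := ⟪z, z'⟫ with hq
  have hq1 : q ≤ a * b := real_inner_le_norm z z'
  have ha0 : 0 ≤ a := norm_nonneg z
  have hb0 : 0 ≤ b := norm_nonneg z'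
  have hXe : ‖softProj R z - softProj R z'‖ ^ 2
      = s⁻¹ ^ 2 * a ^ 2 - 2 * (s⁻¹ * s'⁻¹) * q + s'⁻¹ ^ 2 * b ^ 2 := by
    rw [softProj, softProj, norm_sub_sq_real, real_inner_smul_left, real_inner_smul_right,
      norm_smul, norm_smul]
    rw [← sFun, ← sFun, ← hs, ← hs', ← ha, ← hb, ← hq]
    simp only [Real.norm_eq_abs, mul_pow, sq_abs, abs_of_pos (inv_pos.mpr hs0),
      abs_of_pos (inv_pos.mpr hs0')]
    ring
  have hYe : ‖z - z'‖ ^ 2 = a ^ 2 - 2 * q + b ^ 2 := by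
    rw [norm_sub_sq_real, ← ha, ← hb, ← hq]
  clear_value a b s s' q
  apply le_of_sq_le_sq' (norm_nonneg _)
  rw [hXe, hYe]
  have hss : (0:ℝ) < s ^ 2 * s' ^ 2 := mul_pos (pow_pos hs0 2) (pow_pos hs0' 2)
  have hmul : (s⁻¹ ^ 2 * a ^ 2 - 2 * (s⁻¹ * s'⁻¹) * q + s'⁻¹ ^ 2 * b ^ 2) * (s ^ 2 * s' ^ 2)
      = a ^ 2 * s' ^ 2 - 2 * q * (s * s') + b ^ 2 * s ^ 2 := by
    field_simp [hs0.ne', hs0'.ne']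
  have key : a ^ 2 * (s ^ 2 - 1) * s' ^ 2 + b ^ 2 * (s' ^ 2 - 1) * s ^ 2
      - 2 * (a * b) * (s ^ 2 * s' ^ 2 - 1 - a * b / R ^ 2)
      = (a - b) ^ 2 * (a ^ 2 + b ^ 2 + a ^ 2 * b ^ 2 / R ^ 2) / R ^ 2 := by
    rw [d3, d4]
    field_simp
    ring
  have hssge : 1 ≤ s * s' := le_trans (by nlinarith [div_nonneg (mul_nonneg ha0 hb0) (sq_nonneg R)]) d5
  have h2q : 2 * q * (s ^ 2 * s' ^ 2 - s * s') ≤ 2 * (a * b) * (s ^ 2 * s' ^ 2 - s * s') := by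
    have h0 : (0:ℝ) ≤ s ^ 2 * s' ^ 2 - s * s' := by nlinarith [hssge]
    nlinarith [h0, hq1]
  have h2ab : 2 * (a * b) * (s ^ 2 * s' ^ 2 - s * s')
      ≤ 2 * (a * b) * (s ^ 2 * s' ^ 2 - 1 - a * b / R ^ 2) := by
    have hab : 0 ≤ a * b := mul_nonneg ha0 hb0
    nlinarith
  have hpos : (0:ℝ) ≤ (a - b) ^ 2 * (a ^ 2 + b ^ 2 + a ^ 2 * b ^ 2 / R ^ 2) / R ^ 2 := by
    positivity
  have G'' : a ^ 2 * s' ^ 2 - 2 * q * (s * s') + b ^ 2 * s ^ 2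
      ≤ (a ^ 2 - 2 * q + b ^ 2) * (s ^ 2 * s' ^ 2) := by nlinarith [key, h2q, h2ab, hpos]
  have := hmul.le.trans G''
  exact le_of_mul_le_mul_right this hss

section scalar
variable {s s' a b dl R : ℝ}

lemma scalar_le (hR2 : 0 < R ^ 2) (hs0 : 0 < s) (hs0' : 0 < s')
    (ha2 : a ^ 2 = R ^ 2 * (s ^ 2 - 1)) (hb2 : b ^ 2 = R ^ 2 * (s' ^ 2 - 1))
    (ha0 : 0 ≤ a) (hab : a ≤ b) : s ≤ s' := by
  have hsq : s ^ 2 ≤ s' ^ 2 := by nlinarith [mul_self_le_mul_self ha0 hab]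
  nlinarith [hsq]

lemma scalar_sd (hR : 0 < R) (h1 : 1 ≤ s) (h1' : 1 ≤ s')
    (ha2 : a ^ 2 = R ^ 2 * (s ^ 2 - 1)) (hb2 : b ^ 2 = R ^ 2 * (s' ^ 2 - 1))
    (ha0 : 0 ≤ a) (hb0 : 0 ≤ b) (haRs : a ≤ R * s) (hbRs : b ≤ R * s')
    (hba : b - a ≤ dl) (hd0 : 0 ≤ dl) :
    s' - s ≤ dl / R := by
  rw [le_div_iff₀ hR]
  have hcan : (s' - s) * (s + s') * R ^ 2 = (b - a) * (b + a) := by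
    linear_combination ha2 - hb2
  have h5 : (b - a) * (b + a) ≤ dl * (b + a) :=
    mul_le_mul_of_nonneg_right hba (by linarith)
  have h6 : dl * (b + a) ≤ dl * (R * (s + s')) :=
    mul_le_mul_of_nonneg_left (by linarith) hd0
  have h7 : ((s' - s) * R) * (R * (s + s')) ≤ dl * (R * (s + s')) := by nlinarith [h5, h6, hcan]
  exact le_of_mul_le_mul_right h7 (mul_pos hR (by linarith))

lemma scalar_B1 (hR : 0 < R) (h1 : 1 ≤ s) (h1' : 1 ≤ s') (hss' : s ≤ s')
    (hsd : s' - s ≤ dl / R) (hd0 : 0 ≤ dl) :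
    |s⁻¹ - s'⁻¹| ≤ dl / R := by
  have hs0 : (0:ℝ) < s := by linarith
  have hs0' : (0:ℝ) < s' := by linarith
  have hinv : s⁻¹ - s'⁻¹ = (s' - s) / (s * s') := by field_simp
  have hssge : (1:ℝ) ≤ s * s' := by nlinarith
  rw [hinv, abs_of_nonneg (div_nonneg (by linarith) (by positivity))]
  calc (s' - s) / (s * s') ≤ s' - s := div_le_self (by linarith) hssge
  _ ≤ dl / R := by linarith

lemma scalar_B2 (hR : 0 < R) (h1 : 1 ≤ s) (h1' : 1 ≤ s') (hss' : s ≤ s')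
    (ha2 : a ^ 2 = R ^ 2 * (s ^ 2 - 1))
    (hsd : s' - s ≤ dl / R) (hd0 : 0 ≤ dl) :
    (s⁻¹ ^ 3 / R ^ 2 - s'⁻¹ ^ 3 / R ^ 2) * a ^ 2 ≤ 3 * (dl / R) := by
  have hs0 : (0:ℝ) < s := by linarith
  have hs0' : (0:ℝ) < s' := by linarith
  have e : (s⁻¹ ^ 3 / R ^ 2 - s'⁻¹ ^ 3 / R ^ 2) * a ^ 2
      = ((s' ^ 3 - s ^ 3) * (s ^ 2 - 1)) / (s ^ 3 * s' ^ 3) := by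
    rw [ha2]; field_simp
  have hssge : (1:ℝ) ≤ s * s' := by nlinarith
  have k2 : s ^ 2 + s * s' + s' ^ 2 ≤ 3 * s' ^ 2 := by nlinarith
  have k3 : (s ^ 2 + s * s' + s' ^ 2) * (s ^ 2 - 1) ≤ 3 * s' ^ 2 * s ^ 2 :=
    mul_le_mul k2 (by linarith) (by nlinarith) (by nlinarith)
  have k4 : 3 * s' ^ 2 * s ^ 2 ≤ 3 * (s ^ 3 * s' ^ 3) := by
    nlinarith [mul_nonneg (mul_nonneg (mul_nonneg (by norm_num : (0:ℝ) ≤ 3) (sq_nonneg s)) (sq_nonneg s')) (by linarith : (0:ℝ) ≤ s * s' - 1)]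
  have step1 : (s' ^ 3 - s ^ 3) * (s ^ 2 - 1) ≤ 3 * (s' - s) * (s ^ 3 * s' ^ 3) := by
    calc (s' ^ 3 - s ^ 3) * (s ^ 2 - 1)
        = (s' - s) * ((s ^ 2 + s * s' + s' ^ 2) * (s ^ 2 - 1)) := by ring
      _ ≤ (s' - s) * (3 * (s ^ 3 * s' ^ 3)) :=
          mul_le_mul_of_nonneg_left (by linarith) (by linarith)
      _ = 3 * (s' - s) * (s ^ 3 * s' ^ 3) := by ring
  have hpos3 : (0:ℝ) < s ^ 3 * s' ^ 3 := by positivity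
  rw [e, div_le_iff₀ hpos3]
  nlinarith [step1, mul_le_mul_of_nonneg_right hsd hpos3.le]

lemma scalar_B3 (hR : 0 < R) (h1' : 1 ≤ s') (hx : a ≤ R * s') (ha0 : 0 ≤ a) :
    s'⁻¹ ^ 3 / R ^ 2 * a ≤ 1 / R := by
  have hs0' : (0:ℝ) < s' := by linarith
  have hc'0 : (0:ℝ) ≤ s'⁻¹ ^ 3 / R ^ 2 := by positivity
  have hcube : R * s' ≤ R * s' ^ 3 := by
    nlinarith [mul_nonneg (mul_nonneg (mul_nonneg hR.le hs0'.le) (by linarith : (0:ℝ) ≤ s' - 1)) (by linarith : (0:ℝ) ≤ s' + 1)]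
  calc s'⁻¹ ^ 3 / R ^ 2 * a ≤ s'⁻¹ ^ 3 / R ^ 2 * (R * s' ^ 3) :=
        mul_le_mul_of_nonneg_left (by linarith) hc'0
  _ = 1 / R := by field_simp

end scalar

set_option maxHeartbeats 1000000 in
lemma Jv_lip_aux (hR : 0 < R) (z z' w : EuclideanSpace ℝ (Fin d)) (hab : ‖z‖ ≤ ‖z'‖) :
    ‖Jv R z w - Jv R z' w‖ ≤ 6 / R * ‖z - z'‖ * ‖w‖ := by
  have h1 : 1 ≤ sFun R z := sFun_one_le hR.ne' z
  have h1' : 1 ≤ sFun R z' := sFun_one_le hR.ne' z'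
  have hs0 : (0:ℝ) < sFun R z := lt_of_lt_of_le one_pos h1
  have hs0' : (0:ℝ) < sFun R z' := lt_of_lt_of_le one_pos h1'
  have d3 : (sFun R z) ^ 2 = 1 + ‖z‖ ^ 2 / R ^ 2 := sFun_sq hR.ne' z
  have d4 : (sFun R z') ^ 2 = 1 + ‖z'‖ ^ 2 / R ^ 2 := sFun_sq hR.ne' z'
  have haRs : ‖z‖ ≤ R * sFun R z := norm_le_sFun hR z
  have hbRs : ‖z'‖ ≤ R * sFun R z' := norm_le_sFun hR z'
  set a := ‖z‖ with ha
  set b := ‖z'‖ with hb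
  set s := sFun R z with hs
  set s' := sFun R z' with hs'
  set δ := ‖z - z'‖ with hδ
  set W := ‖w‖ with hW
  set p : ℝ := ⟪z, w⟫ with hp
  set p' : ℝ := ⟪z', w⟫ with hp'
  set pd : ℝ := ⟪z - z', w⟫ with hpd
  set c : ℝ := s⁻¹ ^ 3 / R ^ 2 with hc
  set c' : ℝ := s'⁻¹ ^ 3 / R ^ 2 with hc'
  have hdecomp : Jv R z w - Jv R z' w
      = (s⁻¹ - s'⁻¹) • w - ((c - c') * p) • z - (c' * pd) • z - (c' * p') • (z - z') := by
    simp only [Jv, ← hs, ← hs', ← hc, ← hc', ← hp, ← hp', hpd, inner_sub_left]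
    module
  have hpa : |p| ≤ a * W := abs_real_inner_le_norm z w
  have hpb : |p'| ≤ b * W := abs_real_inner_le_norm z' w
  have hpdd : |pd| ≤ δ * W := abs_real_inner_le_norm (z - z') w
  have hba : b - a ≤ δ := by
    rw [ha, hb, hδ]
    have h := abs_norm_sub_norm_le z' z
    rw [norm_sub_rev] at h
    calc ‖z'‖ - ‖z‖ ≤ |‖z'‖ - ‖z‖| := le_abs_self _
    _ ≤ ‖z - z'‖ := h
  have ha0 : 0 ≤ a := norm_nonneg z
  have hb0 : 0 ≤ b := norm_nonneg z'
  have hδ0 : 0 ≤ δ := norm_nonneg _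
  have hW0 : 0 ≤ W := norm_nonneg w
  have ha2 : a ^ 2 = R ^ 2 * (s ^ 2 - 1) := by
    field_simp at d3; nlinarith [d3]
  have hb2 : b ^ 2 = R ^ 2 * (s' ^ 2 - 1) := by
    field_simp at d4; nlinarith [d4]
  clear_value a b s s' δ W p p' pd
  clear hp d3 d4
  have hR2 : (0:ℝ) < R ^ 2 := by positivity
  have hss' : s ≤ s' := scalar_le hR2 hs0 hs0' ha2 hb2 ha0 hab
  have hsd : s' - s ≤ δ / R := scalar_sd hR h1 h1' ha2 hb2 ha0 hb0 haRs hbRs hba hδ0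
  have hB1 : |s⁻¹ - s'⁻¹| ≤ δ / R := scalar_B1 hR h1 h1' hss' hsd hδ0
  have hB2 : (c - c') * a ^ 2 ≤ 3 * (δ / R) := by
    rw [hc, hc']; exact scalar_B2 hR h1 h1' hss' ha2 hsd hδ0
  have hB3 : c' * a ≤ 1 / R := by
    rw [hc']; exact scalar_B3 hR h1' (by linarith) ha0
  have hB4 : c' * b ≤ 1 / R := by
    rw [hc']; exact scalar_B3 hR h1' hbRs hb0
  have hc0 : 0 ≤ c - c' := by
    have hi : s'⁻¹ ≤ s⁻¹ := by
      rw [inv_le_inv₀ hs0' hs0]; exact hss'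
    have hi0 : (0:ℝ) ≤ s'⁻¹ := by positivity
    have hinv3 : s'⁻¹ ^ 3 ≤ s⁻¹ ^ 3 := pow_le_pow_left₀ hi0 hi 3
    have hcc : c - c' = (s⁻¹ ^ 3 - s'⁻¹ ^ 3) / R ^ 2 := by rw [hc, hc']; ring
    rw [hcc]; exact div_nonneg (by linarith) (by positivity)
  have hc'0 : 0 ≤ c' := by rw [hc']; positivity
  -- assemble
  rw [hdecomp]
  have m1 : ‖(s⁻¹ - s'⁻¹) • w‖ ≤ δ / R * W := by
    rw [norm_smul, Real.norm_eq_abs, ← hW]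
    exact mul_le_mul_of_nonneg_right hB1 hW0
  have m2 : ‖((c - c') * p) • z‖ ≤ 3 * (δ / R) * W := by
    rw [norm_smul, Real.norm_eq_abs, ← ha]
    have u : |(c - c') * p| ≤ (c - c') * (a * W) := by
      rw [abs_mul, abs_of_nonneg hc0]
      exact mul_le_mul_of_nonneg_left hpa hc0
    calc |(c - c') * p| * a ≤ ((c - c') * (a * W)) * a := mul_le_mul_of_nonneg_right u ha0
      _ = ((c - c') * a ^ 2) * W := by ring
      _ ≤ 3 * (δ / R) * W := mul_le_mul_of_nonneg_right hB2 hW0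
  have m3 : ‖(c' * pd) • z‖ ≤ 1 / R * δ * W := by
    rw [norm_smul, Real.norm_eq_abs, ← ha]
    have u : |c' * pd| ≤ c' * (δ * W) := by
      rw [abs_mul, abs_of_nonneg hc'0]
      exact mul_le_mul_of_nonneg_left hpdd hc'0
    calc |c' * pd| * a ≤ (c' * (δ * W)) * a := mul_le_mul_of_nonneg_right u ha0
      _ = (c' * a) * (δ * W) := by ring
      _ ≤ (1 / R) * (δ * W) := mul_le_mul_of_nonneg_right hB3 (mul_nonneg hδ0 hW0)
      _ = 1 / R * δ * W := by ring
  have m4 : ‖(c' * p') • (z - z')‖ ≤ 1 / R * δ * W := by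
    rw [norm_smul, Real.norm_eq_abs, ← hδ]
    have u : |c' * p'| ≤ c' * (b * W) := by
      rw [abs_mul, abs_of_nonneg hc'0]
      exact mul_le_mul_of_nonneg_left hpb hc'0
    calc |c' * p'| * δ ≤ (c' * (b * W)) * δ := mul_le_mul_of_nonneg_right u hδ0
      _ = (c' * b) * (W * δ) := by ring
      _ ≤ (1 / R) * (W * δ) := mul_le_mul_of_nonneg_right hB4 (mul_nonneg hW0 hδ0)
      _ = 1 / R * δ * W := by ring
  have tri : ‖(s⁻¹ - s'⁻¹) • w - ((c - c') * p) • z - (c' * pd) • z - (c' * p') • (z - z')‖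
      ≤ ‖(s⁻¹ - s'⁻¹) • w‖ + ‖((c - c') * p) • z‖ + ‖(c' * pd) • z‖ + ‖(c' * p') • (z - z')‖ := by
    calc ‖(s⁻¹ - s'⁻¹) • w - ((c - c') * p) • z - (c' * pd) • z - (c' * p') • (z - z')‖
        ≤ ‖(s⁻¹ - s'⁻¹) • w - ((c - c') * p) • z - (c' * pd) • z‖ + ‖(c' * p') • (z - z')‖ :=
          norm_sub_le _ _
      _ ≤ ‖(s⁻¹ - s'⁻¹) • w - ((c - c') * p) • z‖ + ‖(c' * pd) • z‖ + ‖(c' * p') • (z - z')‖ := by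
          linarith [norm_sub_le ((s⁻¹ - s'⁻¹) • w - ((c - c') * p) • z) ((c' * pd) • z)]
      _ ≤ ‖(s⁻¹ - s'⁻¹) • w‖ + ‖((c - c') * p) • z‖ + ‖(c' * pd) • z‖ + ‖(c' * p') • (z - z')‖ := by
          linarith [norm_sub_le ((s⁻¹ - s'⁻¹) • w) (((c - c') * p) • z)]
  have total : δ / R * W + 3 * (δ / R) * W + 1 / R * δ * W + 1 / R * δ * W
      = 6 / R * δ * W := by ring
  linarith [tri, m1, m2, m3, m4]

lemma Jv_lip (hR : 0 < R) (z z' w : EuclideanSpace ℝ (Fin d)) :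
    ‖Jv R z w - Jv R z' w‖ ≤ 6 / R * ‖z - z'‖ * ‖w‖ := by
  rcases le_total ‖z‖ ‖z'‖ with h | h
  · exact Jv_lip_aux hR z z' w h
  · rw [norm_sub_rev, norm_sub_rev z z']
    exact Jv_lip_aux hR z' z w h

-- new material
lemma inner_symm {k : ℕ} (u v : Fin k → ℝ) :
    ⟪(WithLp.equiv 2 (Fin k → ℝ)).symm u, (WithLp.equiv 2 (Fin k → ℝ)).symm v⟫
      = u ⬝ᵥ v := by
  simp [PiLp.inner_apply, dotProduct]
  exact Finset.sum_congr rfl fun i _ => mul_comm _ _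

lemma symm_sub {k : ℕ} (u v : Fin k → ℝ) :
    (WithLp.equiv 2 (Fin k → ℝ)).symm u - (WithLp.equiv 2 (Fin k → ℝ)).symm v
      = (WithLp.equiv 2 (Fin k → ℝ)).symm (u - v) := rfl

variable {T n : ℕ} {U : Matrix (Fin n) (Fin T) ℝ}

lemma U_dot (hU : U.transpose * U = 1) (x y : Fin T → ℝ) :
    (U.mulVec x) ⬝ᵥ (U.mulVec y) = x ⬝ᵥ y := by
  rw [Matrix.dotProduct_mulVec, ← Matrix.mulVec_transpose, Matrix.mulVec_mulVec, hU,
    Matrix.one_mulVec]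

lemma U_norm (hU : U.transpose * U = 1) (x : Fin T → ℝ) :
    ‖(WithLp.equiv 2 (Fin n → ℝ)).symm (U.mulVec x)‖
      = ‖(WithLp.equiv 2 (Fin T → ℝ)).symm x‖ := by
  have h1 : ‖(WithLp.equiv 2 (Fin n → ℝ)).symm (U.mulVec x)‖ ^ 2
      = ‖(WithLp.equiv 2 (Fin T → ℝ)).symm x‖ ^ 2 := by
    rw [← real_inner_self_eq_norm_sq, ← real_inner_self_eq_norm_sq, inner_symm, inner_symm,
      U_dot hU]
  have h2 := norm_nonneg ((WithLp.equiv 2 (Fin n → ℝ)).symm (U.mulVec x))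
  have h3 := norm_nonneg ((WithLp.equiv 2 (Fin T → ℝ)).symm x)
  nlinarith [h1, h2, h3]

lemma Ut_norm_le (hU : U.transpose * U = 1) (v : Fin n → ℝ) :
    ‖(WithLp.equiv 2 (Fin T → ℝ)).symm (U.transpose.mulVec v)‖
      ≤ ‖(WithLp.equiv 2 (Fin n → ℝ)).symm v‖ := by
  set y := U.transpose.mulVec v with hy
  have key : ‖(WithLp.equiv 2 (Fin T → ℝ)).symm y‖ ^ 2
      = ⟪(WithLp.equiv 2 (Fin n → ℝ)).symm (U.mulVec y),
          (WithLp.equiv 2 (Fin n → ℝ)).symm v⟫ := by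
    rw [← real_inner_self_eq_norm_sq, inner_symm, inner_symm, hy,
      Matrix.dotProduct_mulVec, ← Matrix.mulVec_transpose, Matrix.transpose_transpose]
  have hc := real_inner_le_norm ((WithLp.equiv 2 (Fin n → ℝ)).symm (U.mulVec y))
    ((WithLp.equiv 2 (Fin n → ℝ)).symm v)
  rw [U_norm hU] at hc
  set Y := ‖(WithLp.equiv 2 (Fin T → ℝ)).symm y‖
  set V := ‖(WithLp.equiv 2 (Fin n → ℝ)).symm v‖
  have hY : 0 ≤ Y := norm_nonneg _
  have hV : 0 ≤ V := norm_nonneg _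
  nlinarith [key, hc, hY, hV]

lemma g_norm_le {G : ℝ} (hG : 0 ≤ G) (x : EuclideanSpace ℝ (Fin T))
    (hbd : ∀ i, |x i| ≤ G) : ‖x‖ ≤ Real.sqrt T * G := by
  rw [EuclideanSpace.norm_eq]
  have h1 : ∑ i, ‖x i‖ ^ 2 ≤ (T : ℝ) * G ^ 2 := by
    calc ∑ i, ‖x i‖ ^ 2 ≤ ∑ _i : Fin T, G ^ 2 := by
          apply Finset.sum_le_sum
          intro i _
          rw [Real.norm_eq_abs]
          exact pow_le_pow_left₀ (abs_nonneg _) (hbd i) 2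
      _ = (T : ℝ) * G ^ 2 := by simp [Finset.sum_const, mul_comm]
  calc Real.sqrt (∑ i, ‖x i‖ ^ 2) ≤ Real.sqrt ((T : ℝ) * G ^ 2) := Real.sqrt_le_sqrt h1
  _ = Real.sqrt T * G := by
      rw [Real.sqrt_mul (Nat.cast_nonneg T), Real.sqrt_sq hG]

/-- If `∇φ` is `ℓ`-Lipschitz with `‖∇φ‖_∞ ≤ G`, `U` has orthonormal columns, and `ρ_R` is
the soft projection, then `∇h(z) = J_R(z)ᵀ U ∇φ(Uᵀρ_R(z)) + ηz` is Lipschitz with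
constant at most `ℓ + 6G√T/R + η`. -/
theorem softCompGrad_lipschitz (T n : ℕ) (R ℓ G η : ℝ) (hR : 0 < R)
    (hℓ : 0 ≤ ℓ) (hG : 0 ≤ G) (hη : 0 ≤ η)
    (U : Matrix (Fin n) (Fin T) ℝ) (hU : U.transpose * U = 1)
    (gφ : EuclideanSpace ℝ (Fin T) → EuclideanSpace ℝ (Fin T))
    (hφlip : ∀ u v, ‖gφ u - gφ v‖ ≤ ℓ * ‖u - v‖)
    (hφbd : ∀ u i, |gφ u i| ≤ G) :
    ∀ z z' : EuclideanSpace ℝ (Fin n),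
      ‖softCompGrad T n R η U gφ z - softCompGrad T n R η U gφ z'‖
        ≤ (ℓ + 6 * G * Real.sqrt T / R + η) * ‖z - z'‖ := by
  intro z z'
  set u := (WithLp.equiv 2 (Fin T → ℝ)).symm
    (U.transpose.mulVec (WithLp.equiv 2 (Fin n → ℝ) (softProj R z))) with hu
  set u' := (WithLp.equiv 2 (Fin T → ℝ)).symm
    (U.transpose.mulVec (WithLp.equiv 2 (Fin n → ℝ) (softProj R z'))) with hu'
  set x := (WithLp.equiv 2 (Fin n → ℝ)).symm
    (U.mulVec (WithLp.equiv 2 (Fin T → ℝ) (gφ u))) with hx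
  set x' := (WithLp.equiv 2 (Fin n → ℝ)).symm
    (U.mulVec (WithLp.equiv 2 (Fin T → ℝ) (gφ u'))) with hx'
  have hsplit : softCompGrad T n R η U gφ z - softCompGrad T n R η U gφ z'
      = Jv R z (x - x') + (Jv R z x' - Jv R z' x') + η • (z - z') := by
    rw [softCompGrad, softCompGrad, softJac_transpose_mulVec, softJac_transpose_mulVec,
      ← hu, ← hu', ← hx, ← hx', ← Jv_sub]
    rw [smul_sub]
    abel
  -- bound 1 : ‖Jv R z (x - x')‖ ≤ ℓ * ‖z - z'‖
  have hxdiff : x - x' = (WithLp.equiv 2 (Fin n → ℝ)).symm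
      (U.mulVec (WithLp.equiv 2 (Fin T → ℝ) (gφ u) - WithLp.equiv 2 (Fin T → ℝ) (gφ u'))) := by
    rw [hx, hx', symm_sub, Matrix.mulVec_sub]
  have hb1 : ‖Jv R z (x - x')‖ ≤ ℓ * ‖z - z'‖ := by
    calc ‖Jv R z (x - x')‖ ≤ ‖x - x'‖ := Jv_norm_le hR z _
      _ = ‖gφ u - gφ u'‖ := by
          rw [hxdiff, U_norm hU]
          rfl
      _ ≤ ℓ * ‖u - u'‖ := hφlip u u'
      _ ≤ ℓ * ‖z - z'‖ := by
          apply mul_le_mul_of_nonneg_left _ hℓ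
          have e : u - u' = (WithLp.equiv 2 (Fin T → ℝ)).symm
              (U.transpose.mulVec (WithLp.equiv 2 (Fin n → ℝ) (softProj R z)
                - WithLp.equiv 2 (Fin n → ℝ) (softProj R z'))) := by
            rw [hu, hu', symm_sub, Matrix.mulVec_sub]
          calc ‖u - u'‖ ≤ ‖(WithLp.equiv 2 (Fin n → ℝ)).symm
                (WithLp.equiv 2 (Fin n → ℝ) (softProj R z)
                  - WithLp.equiv 2 (Fin n → ℝ) (softProj R z'))‖ := by
                rw [e]; exact Ut_norm_le hU _
            _ = ‖softProj R z - softProj R z'‖ := rfl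
            _ ≤ ‖z - z'‖ := softProj_lip hR z z'
  -- bound 2
  have hb2 : ‖Jv R z x' - Jv R z' x'‖ ≤ 6 / R * ‖z - z'‖ * (Real.sqrt T * G) := by
    calc ‖Jv R z x' - Jv R z' x'‖ ≤ 6 / R * ‖z - z'‖ * ‖x'‖ := Jv_lip hR z z' x'
      _ ≤ 6 / R * ‖z - z'‖ * (Real.sqrt T * G) := by
          apply mul_le_mul_of_nonneg_left _ (by positivity)
          have : ‖x'‖ = ‖gφ u'‖ := by rw [hx', U_norm hU]; rfl
          rw [this]
          exact g_norm_le hG (gφ u') (hφbd u')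
  have hb3 : ‖η • (z - z')‖ = η * ‖z - z'‖ := by
    rw [norm_smul, Real.norm_eq_abs, abs_of_nonneg hη]
  rw [hsplit]
  have tri : ‖Jv R z (x - x') + (Jv R z x' - Jv R z' x') + η • (z - z')‖
      ≤ ‖Jv R z (x - x')‖ + ‖Jv R z x' - Jv R z' x'‖ + ‖η • (z - z')‖ := by
    calc ‖Jv R z (x - x') + (Jv R z x' - Jv R z' x') + η • (z - z')‖
        ≤ ‖Jv R z (x - x') + (Jv R z x' - Jv R z' x')‖ + ‖η • (z - z')‖ := norm_add_le _ _
      _ ≤ ‖Jv R z (x - x')‖ + ‖Jv R z x' - Jv R z' x'‖ + ‖η • (z - z')‖ := by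
          linarith [norm_add_le (Jv R z (x - x')) (Jv R z x' - Jv R z' x')]
  have total : ℓ * ‖z - z'‖ + 6 / R * ‖z - z'‖ * (Real.sqrt T * G) + η * ‖z - z'‖
      = (ℓ + 6 * G * Real.sqrt T / R + η) * ‖z - z'‖ := by ring
  linarith [tri, hb1, hb2, hb3.le]
end

section
/- Let F : R^{m×n} → R satisfy F(Y) ≤ F(X) + ⟨∇F(X), Y−X⟩ + ((L₀ + L₁‖∇F(X)‖_*)/2)‖Y−X‖² whenever ‖Y−X‖ ≤ 1/L₁. Consider the update X_{t+1} = X_t + η·lmo(m_{t+1}) with η ≤ 1/L₁. Then F(X_{t+1}) ≤ F(X_t) − η‖∇F(X_t)‖_* + 2η‖m_{t+1} − ∇F(X_t)‖_* + (η²/2)(L₀ + L₁‖∇F(X_t)‖_*). -/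
/-- The trace inner product `⟨A,B⟩ = tr(AᵀB)` on real matrices. -/
noncomputable def traceInner {m n : ℕ} (A B : Matrix (Fin m) (Fin n) ℝ) : ℝ :=
  Matrix.trace (A.transpose * B)

lemma traceInner_smul_right {m n : ℕ} (c : ℝ) (A B : Matrix (Fin m) (Fin n) ℝ) :
    traceInner A (c • B) = c * traceInner A B := by
  simp [traceInner, Matrix.mul_smul, smul_eq_mul]

lemma traceInner_add_left {m n : ℕ} (A B C : Matrix (Fin m) (Fin n) ℝ) :
    traceInner (A + B) C = traceInner A C + traceInner B C := by
  simp [traceInner, Matrix.transpose_add, Matrix.add_mul]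

lemma traceInner_self_eq_sum {m n : ℕ} (A : Matrix (Fin m) (Fin n) ℝ) :
    traceInner A A = ∑ j, ∑ i, A i j ^ 2 := by
  simp [traceInner, Matrix.trace, Matrix.mul_apply, Matrix.diag, sq]

lemma traceInner_self_pos {m n : ℕ} (A : Matrix (Fin m) (Fin n) ℝ) (hA : A ≠ 0) :
    0 < traceInner A A := by
  rw [traceInner_self_eq_sum]
  obtain ⟨i, j, hij⟩ : ∃ i j, A i j ≠ 0 := by
    by_contra h
    push_neg at h
    exact hA (by ext i j; simp [h i j])
  have : (0:ℝ) < A i j ^ 2 := by positivity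
  calc (0:ℝ) < A i j ^ 2 := this
    _ ≤ ∑ i, A i j ^ 2 := Finset.single_le_sum (f := fun i => A i j ^ 2)
          (fun k _ => sq_nonneg _) (Finset.mem_univ i)
    _ ≤ ∑ j, ∑ i, A i j ^ 2 :=
        Finset.single_le_sum (f := fun j => ∑ i, A i j ^ 2)
          (fun k _ => Finset.sum_nonneg fun _ _ => sq_nonneg _) (Finset.mem_univ j)

/-- One-step descent of the LMO update `X⁺ = X + η·lmo(m')`: under the generalized-smooth
descent inequality, the dual/primal norm duality, and the LMO properties
`‖lmo(m')‖ ≤ 1`, `⟨m', lmo(m')⟩ = −‖m'‖_*`, one gets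
`F(X⁺) ≤ F(X) − η‖∇F(X)‖_* + 2η‖m' − ∇F(X)‖_* + (η²/2)(L₀ + L₁‖∇F(X)‖_*)`. -/
theorem lmo_step_descent (m n : ℕ)
    (Nn Ns : Matrix (Fin m) (Fin n) ℝ → ℝ)
    (F : Matrix (Fin m) (Fin n) ℝ → ℝ)
    (gradF : Matrix (Fin m) (Fin n) ℝ → Matrix (Fin m) (Fin n) ℝ)
    (L0 L1 η : ℝ) (hL0 : 0 ≤ L0) (hL1 : 0 ≤ L1) (hη : 0 ≤ η) (hηL1 : η * L1 ≤ 1)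
    (hNn_hom : ∀ (c : ℝ) A, Nn (c • A) = |c| * Nn A)
    (hNs_nonneg : ∀ A, 0 ≤ Ns A)
    (hNs_neg : ∀ A, Ns (-A) = Ns A)
    (hNs_tri : ∀ A B, Ns (A + B) ≤ Ns A + Ns B)
    (hdual : ∀ A B, traceInner A B ≤ Ns A * Nn B)
    (hdesc : ∀ X Y, L1 * Nn (Y - X) ≤ 1 →
      F Y ≤ F X + traceInner (gradF X) (Y - X) +
        ((L0 + L1 * Ns (gradF X)) / 2) * (Nn (Y - X)) ^ 2)
    (X mnext D : Matrix (Fin m) (Fin n) ℝ)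
    (hD : Nn D ≤ 1) (hDopt : traceInner mnext D = -(Ns mnext)) :
    F (X + η • D) ≤ F X - η * Ns (gradF X) + 2 * η * Ns (mnext - gradF X) +
      (η ^ 2 / 2) * (L0 + L1 * Ns (gradF X)) := by
  -- Nn D is nonnegative
  have hNnD0 : 0 ≤ Nn D := by
    by_cases h0 : D = 0
    · have := hNn_hom 0 0
      simp at this
      simp [h0, this]
    · have hpos := traceInner_self_pos D h0
      have hdd := hdual D D
      have hs := hNs_nonneg D
      nlinarith
  have hYX : X + η • D - X = η • D := add_sub_cancel_left X _
  have hNnY : Nn (η • D) = η * Nn D := by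
    rw [hNn_hom, abs_of_nonneg hη]
  have h1 : L1 * Nn (X + η • D - X) ≤ 1 := by
    rw [hYX, hNnY]
    nlinarith
  have h2 := hdesc X (X + η • D) h1
  rw [hYX, hNnY, traceInner_smul_right] at h2
  -- bound the inner product ⟨g, D⟩
  set g := gradF X with hg
  have hsplit : traceInner g D = traceInner mnext D + traceInner (g - mnext) D := by
    have := traceInner_add_left mnext (g - mnext) D
    simpa using this
  have hdgm := hdual (g - mnext) D
  have hgm_nonneg := hNs_nonneg (g - mnext)
  have hgm_eq : Ns (g - mnext) = Ns (mnext - g) := by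
    rw [← hNs_neg (g - mnext), neg_sub]
  have htri : Ns g ≤ Ns mnext + Ns (g - mnext) := by
    have := hNs_tri mnext (g - mnext)
    simpa using this
  have hinner : traceInner g D ≤ -(Ns g) + 2 * Ns (mnext - g) := by
    have hbd : traceInner (g - mnext) D ≤ Ns (g - mnext) := by
      nlinarith
    rw [hsplit, hDopt, ← hgm_eq]
    linarith
  -- quadratic term bound
  have hsq : (η * Nn D) ^ 2 ≤ η ^ 2 := by
    have h3 : (Nn D) ^ 2 ≤ 1 := by nlinarith
    calc (η * Nn D) ^ 2 = η ^ 2 * (Nn D) ^ 2 := by ring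
      _ ≤ η ^ 2 * 1 := by nlinarith [sq_nonneg η]
      _ = η ^ 2 := by ring
  have hcoeff : 0 ≤ (L0 + L1 * Ns g) / 2 := by
    have := hNs_nonneg g; positivity
  nlinarith [mul_le_mul_of_nonneg_left hsq hcoeff, mul_le_mul_of_nonneg_left hinner hη]
end

section
/- Let r = min{m,n} and p ∈ (1,2]. There exists a martingale difference sequence Z₁,…,Z_r of matrices in R^{m×n} such that E‖Σ_{k=1}^r Z_k‖_nuc = r while E(Σ_{k=1}^r ‖Z_k‖_nuc^p)^{1/p} = r^{1/p}; namely Z_k = ε_k E_{kk} with independent Rademacher signs ε_k. Consequently, the martingale factor τ(‖·‖_nuc, m, n, p) := sup E‖ΣZ_t‖_nuc / E(Σ‖Z_t‖_nuc^p)^{1/p} over all martingale difference sequences satisfies τ ≥ r^{1−1/p}. -/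
open MeasureTheory

/-- The spectral (operator) norm of a real matrix, viewed as a linear map between
Euclidean spaces. -/
noncomputable def matrixOpNorm {m n : ℕ} (X : Matrix (Fin m) (Fin n) ℝ) : ℝ :=
  ‖LinearMap.toContinuousLinearMap (Matrix.toEuclideanLin X)‖

/-- The nuclear norm of a real matrix, defined by duality with the operator norm. -/
noncomputable def matrixNuclearNorm {m n : ℕ} (Y : Matrix (Fin m) (Fin n) ℝ) : ℝ :=
  sSup {c | ∃ X : Matrix (Fin m) (Fin n) ℝ, matrixOpNorm X ≤ 1 ∧ c = Matrix.trace (Y.transpose * X)}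

section MatrixLemmas
open Matrix

lemma NMFLB.abs_entry_le {m n : ℕ} (X : Matrix (Fin m) (Fin n) ℝ) (i : Fin m) (j : Fin n) :
    |X i j| ≤ matrixOpNorm X := by
  set f := LinearMap.toContinuousLinearMap (Matrix.toEuclideanLin X)
  have h1 : X i j = f (EuclideanSpace.single j 1) i := by
    simp [f, Matrix.toEuclideanLin_apply, Matrix.mulVec, dotProduct,
      EuclideanSpace.single_apply]
  have h2 : |f (EuclideanSpace.single j 1) i| ≤ ‖f (EuclideanSpace.single j 1)‖ := by
    rw [EuclideanSpace.norm_eq]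
    rw [← Real.sqrt_sq_eq_abs]
    apply Real.sqrt_le_sqrt
    refine Finset.single_le_sum (f := fun i => ‖f (EuclideanSpace.single j 1) i‖ ^ 2) ?_
      (Finset.mem_univ i) |>.trans_eq' ?_
    · intro k _; positivity
    · rw [Real.norm_eq_abs, sq_abs]
  calc |X i j| ≤ ‖f (EuclideanSpace.single j 1)‖ := h1 ▸ h2
    _ ≤ ‖f‖ * ‖EuclideanSpace.single (𝕜 := ℝ) j (1:ℝ)‖ := f.le_opNorm _
    _ ≤ matrixOpNorm X := by rw [EuclideanSpace.norm_single]; simp [matrixOpNorm, f]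

lemma NMFLB.trace_std {m n : ℕ} (a : Fin m) (b : Fin n) (X : Matrix (Fin m) (Fin n) ℝ) :
    Matrix.trace ((Matrix.single a b (1:ℝ))ᵀ * X) = X a b := by
  simp only [Matrix.trace, Matrix.mul_apply, Matrix.diag, Matrix.transpose_apply,
    Matrix.single, Matrix.of_apply, ite_mul, one_mul, zero_mul, ite_and]
  simp [Finset.sum_ite_eq, Finset.sum_ite_eq']

lemma NMFLB.trace_sum_std {m n r : ℕ} (g : Fin r → Fin m) (g' : Fin r → Fin n) (c : Fin r → ℝ)
    (X : Matrix (Fin m) (Fin n) ℝ) :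
    Matrix.trace ((∑ k, c k • Matrix.single (g k) (g' k) (1:ℝ))ᵀ * X)
      = ∑ k, c k * X (g k) (g' k) := by
  rw [Matrix.transpose_sum, Matrix.sum_mul, Matrix.trace_sum]
  refine Finset.sum_congr rfl fun k _ => ?_
  rw [Matrix.transpose_smul, Matrix.smul_mul, Matrix.trace_smul, NMFLB.trace_std, smul_eq_mul]

lemma NMFLB.opNorm_sum_std_le {m n r : ℕ} {g : Fin r → Fin m} {g' : Fin r → Fin n}
    (hg : Function.Injective g) (hg' : Function.Injective g') (c : Fin r → ℝ)
    (hc : ∀ k, |c k| ≤ 1) :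
    matrixOpNorm (∑ k, c k • Matrix.single (g k) (g' k) (1:ℝ)) ≤ 1 := by
  set M := ∑ k, c k • Matrix.single (g k) (g' k) (1:ℝ) with hM
  apply ContinuousLinearMap.opNorm_le_bound _ zero_le_one
  intro v
  rw [one_mul]
  set w := LinearMap.toContinuousLinearMap (Matrix.toEuclideanLin M) v with hw
  have hwdef : ∀ i, w i = ∑ k, (if g k = i then c k * v (g' k) else 0) := by
    intro i
    show (M *ᵥ (WithLp.equiv 2 (Fin n → ℝ) v)) i = _
    rw [Matrix.mulVec, dotProduct]
    rw [hM]
    simp only [Finset.sum_apply, Matrix.sum_apply, Matrix.smul_apply, Matrix.single,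
      Matrix.of_apply, smul_eq_mul, mul_ite, mul_one, mul_zero, ite_and, Finset.sum_ite_irrel,
      Finset.sum_const_zero, Finset.sum_ite_eq, Finset.sum_ite_eq']
    simp only [Finset.sum_mul]
    rw [Finset.sum_comm]
    refine Finset.sum_congr rfl fun k _ => ?_
    by_cases h : g k = i
    · simp only [h, if_true, ite_mul, zero_mul, Finset.sum_ite_eq, Finset.mem_univ, if_true]
      rfl
    · simp [h]
  rw [EuclideanSpace.norm_eq, EuclideanSpace.norm_eq]
  apply Real.sqrt_le_sqrt
  have hzero : ∀ i ∈ Finset.univ \ Finset.univ.image g, ‖w i‖ ^ 2 = 0 := by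
    intro i hi
    simp only [Finset.mem_sdiff, Finset.mem_image] at hi
    have : w i = 0 := by
      rw [hwdef]
      exact Finset.sum_eq_zero fun k _ => if_neg fun h => hi.2 ⟨k, Finset.mem_univ k, h⟩
    simp [this]
  calc ∑ i, ‖w i‖ ^ 2 = ∑ i ∈ Finset.univ.image g, ‖w i‖ ^ 2 := by
        exact (Finset.sum_subset (Finset.subset_univ _) (fun i _ hi =>
          hzero i (Finset.mem_sdiff.mpr ⟨Finset.mem_univ i, hi⟩))).symm
    _ = ∑ k, ‖w (g k)‖ ^ 2 := by rw [Finset.sum_image fun a _ b _ h => hg h]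
    _ ≤ ∑ k, ‖v (g' k)‖ ^ 2 := by
        refine Finset.sum_le_sum fun k _ => ?_
        have : w (g k) = c k * v (g' k) := by
          rw [hwdef]
          rw [Finset.sum_eq_single k]
          · simp
          · intro b _ hb; exact if_neg fun h => hb (hg h)
          · simp
        rw [this, Real.norm_eq_abs, Real.norm_eq_abs, abs_mul]
        have h1 : |c k| * |v (g' k)| ≤ 1 * |v (g' k)| :=
          mul_le_mul_of_nonneg_right (hc k) (abs_nonneg _)
        have h2 : |c k| * |v (g' k)| ≤ |v (g' k)| := by simpa using h1
        exact pow_le_pow_left₀ (by positivity) h2 2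
    _ = ∑ k ∈ Finset.univ.image g', ‖v k‖ ^ 2 := by
        rw [Finset.sum_image fun a _ b _ h => hg' h]
    _ ≤ ∑ j, ‖v j‖ ^ 2 := by
        apply Finset.sum_le_sum_of_subset_of_nonneg (Finset.subset_univ _)
        intro j _ _; positivity

lemma NMFLB.entry_sum_std {m n r : ℕ} {g : Fin r → Fin m} {g' : Fin r → Fin n}
    (hg : Function.Injective g) (d : Fin r → ℝ) (k : Fin r) :
    (∑ j, d j • Matrix.single (g j) (g' j) (1:ℝ)) (g k) (g' k) = d k := by
  simp only [Matrix.sum_apply, Matrix.smul_apply, smul_eq_mul]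
  rw [Finset.sum_eq_single k]
  · simp
  · intro b _ hb
    rw [Matrix.single_apply_of_row_ne (fun h => hb (hg h))]
    simp
  · simp

lemma NMFLB.nuclearNorm_sum_std {m n r : ℕ} {g : Fin r → Fin m} {g' : Fin r → Fin n}
    (hg : Function.Injective g) (hg' : Function.Injective g') (c : Fin r → ℝ) :
    matrixNuclearNorm (∑ k, c k • Matrix.single (g k) (g' k) (1:ℝ)) = ∑ k, |c k| := by
  set Y := ∑ k, c k • Matrix.single (g k) (g' k) (1:ℝ) with hY
  set S := {a | ∃ X : Matrix (Fin m) (Fin n) ℝ,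
    matrixOpNorm X ≤ 1 ∧ a = Matrix.trace (Y.transpose * X)} with hS
  have hub : ∀ a ∈ S, a ≤ ∑ k, |c k| := by
    rintro a ⟨X, hX, rfl⟩
    rw [NMFLB.trace_sum_std]
    refine Finset.sum_le_sum fun k _ => ?_
    calc c k * X (g k) (g' k) ≤ |c k * X (g k) (g' k)| := le_abs_self _
      _ = |c k| * |X (g k) (g' k)| := abs_mul _ _
      _ ≤ |c k| * 1 := mul_le_mul_of_nonneg_left
          ((NMFLB.abs_entry_le X _ _).trans hX) (abs_nonneg _)
      _ = |c k| := mul_one _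
  have hmem : (∑ k, |c k|) ∈ S := by
    refine ⟨∑ k, (if c k ≤ 0 then (-1:ℝ) else 1) • Matrix.single (g k) (g' k) (1:ℝ), ?_, ?_⟩
    · apply NMFLB.opNorm_sum_std_le hg hg'
      intro k
      by_cases h : c k ≤ 0 <;> simp [h]
    · rw [NMFLB.trace_sum_std]
      refine Finset.sum_congr rfl fun k _ => ?_
      rw [NMFLB.entry_sum_std hg]
      by_cases h : c k ≤ 0
      · simp [h, abs_of_nonpos h]
      · simp [h, abs_of_pos (lt_of_not_ge h)]
  have hne : S.Nonempty := ⟨_, hmem⟩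
  have hbdd : BddAbove S := ⟨∑ k, |c k|, hub⟩
  exact le_antisymm (csSup_le hne hub) (le_csSup hbdd hmem)

end MatrixLemmas

noncomputable def NMFLB.nu : Measure Bool :=
  (2:ENNReal)⁻¹ • (Measure.dirac true + Measure.dirac false)

instance : IsProbabilityMeasure NMFLB.nu := by
  constructor
  simp [NMFLB.nu, Measure.smul_apply, Measure.add_apply]
  rw [ENNReal.inv_two_add_inv_two]

lemma NMFLB.nu_singleton (b : Bool) : NMFLB.nu {b} = 1/2 := by
  cases b <;> simp [NMFLB.nu, Measure.smul_apply, Measure.add_apply, Measure.dirac_apply]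

noncomputable def NMFLB.mu (r : ℕ) : Measure (Fin r → Bool) := Measure.pi (fun _ => NMFLB.nu)

instance (r : ℕ) : IsProbabilityMeasure (NMFLB.mu r) := by unfold NMFLB.mu; infer_instance

lemma NMFLB.mu_eval (r : ℕ) (k : Fin r) (B : Set Bool) :
    NMFLB.mu r ((fun ω => ω k) ⁻¹' B) = NMFLB.nu B := by
  have : (fun ω : Fin r → Bool => ω k) ⁻¹' B
      = Set.pi Set.univ (fun i => if i = k then B else Set.univ) := by
    ext ω
    simp only [Set.mem_preimage, Set.mem_pi, Set.mem_univ, forall_true_left]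
    constructor
    · intro h i; by_cases hik : i = k <;> simp [hik, h]
    · intro h; have := h k; simpa using this
  rw [this, NMFLB.mu, Measure.pi_pi]
  rw [Finset.prod_eq_single k]
  · simp
  · intro b _ hb; rw [if_neg hb]; exact measure_univ
  · simp

lemma NMFLB.indep_eps (r : ℕ) (ε : Fin r → (Fin r → Bool) → ℝ)
    (hε : ∀ k, ε k = fun ω => if ω k then 1 else -1) :
    ProbabilityTheory.iIndepFun ε (NMFLB.mu r) := by
  rw [ProbabilityTheory.iIndepFun_iff_measure_inter_preimage_eq_mul]
  intro S sets _
  set B : Fin r → Set Bool := fun k => (fun b => if b then (1:ℝ) else -1) ⁻¹' sets k with hB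
  have key : ∀ k, ε k ⁻¹' sets k = (fun ω : Fin r → Bool => ω k) ⁻¹' (B k) := by
    intro k; rw [hε]; rfl
  simp only [key, NMFLB.mu_eval]
  have : (⋂ i ∈ S, (fun ω : Fin r → Bool => ω i) ⁻¹' (B i))
      = Set.pi Set.univ (fun i => if i ∈ S then B i else Set.univ) := by
    ext ω
    simp only [Set.mem_iInter, Set.mem_preimage, Set.mem_pi, Set.mem_univ, forall_true_left]
    constructor
    · intro h i; by_cases hi : i ∈ S <;> simp [hi, h]
    · intro h i hi; have := h i; rwa [if_pos hi] at this
  rw [this, NMFLB.mu, Measure.pi_pi]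
  rw [← Finset.prod_subset (Finset.subset_univ S)]
  · exact Finset.prod_congr rfl fun i hi => by rw [if_pos hi]
  · intro i _ hi; rw [if_neg hi]; exact measure_univ

/-- Lower bound on the nuclear-norm martingale factor: with `r = min m n` and
`Z_k = ε_k E_{kk}` for independent Rademacher signs `ε_k`, one has
`E‖Σ Z_k‖_nuc = r` while `E(Σ ‖Z_k‖_nuc^p)^{1/p} = r^{1/p}`, so the ratio equals
`r^{1−1/p}` and the martingale factor `τ(‖·‖_nuc, m, n, p)` is at least `r^{1−1/p}`. -/
theorem nuclear_martingale_factor_lower_bound (m n : ℕ) (hm : 1 ≤ m) (hn : 1 ≤ n)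
    (p : ℝ) (hp1 : 1 < p) (hp2 : p ≤ 2) :
    ∃ (Ω : Type) (_ : MeasurableSpace Ω) (μ : Measure Ω)
      (_ : IsProbabilityMeasure μ) (ε : Fin (min m n) → Ω → ℝ),
      (∀ k, Measurable (ε k)) ∧
      (∀ k ω, ε k ω = 1 ∨ ε k ω = -1) ∧
      (∀ k, μ {ω | ε k ω = 1} = 1 / 2) ∧
      ProbabilityTheory.iIndepFun ε μ ∧
      (let Z : Fin (min m n) → Ω → Matrix (Fin m) (Fin n) ℝ := fun k ω =>
        ε k ω • Matrix.single
          (Fin.castLE (min_le_left m n) k) (Fin.castLE (min_le_right m n) k) 1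
       (∫ ω, matrixNuclearNorm (∑ k, Z k ω) ∂μ) = (min m n : ℝ) ∧
       (∫ ω, (∑ k, matrixNuclearNorm (Z k ω) ^ p) ^ (1 / p) ∂μ) = (min m n : ℝ) ^ ((1:ℝ) / p) ∧
       (∫ ω, matrixNuclearNorm (∑ k, Z k ω) ∂μ) =
         (min m n : ℝ) ^ (1 - 1 / p) *
           ∫ ω, (∑ k, matrixNuclearNorm (Z k ω) ^ p) ^ (1 / p) ∂μ) := by
  set r := min m n with hr
  set g : Fin r → Fin m := Fin.castLE (min_le_left m n) with hg
  set g' : Fin r → Fin n := Fin.castLE (min_le_right m n) with hg'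
  have hginj : Function.Injective g := fun a b h => by
    simpa [hg, Fin.ext_iff] using congrArg Fin.val h
  have hg'inj : Function.Injective g' := fun a b h => by
    simpa [hg', Fin.ext_iff] using congrArg Fin.val h
  refine ⟨Fin r → Bool, inferInstance, NMFLB.mu r, inferInstance,
    fun k ω => if ω k then 1 else -1, ?_, ?_, ?_, ?_, ?_⟩
  · intro k
    exact Measurable.comp (f := fun ω : Fin r → Bool => ω k)
      (g := fun b : Bool => if b then (1:ℝ) else -1)
      (Measurable.of_discrete) (measurable_pi_apply k)
  · intro k ω
    by_cases h : ω k
    · left; simp [h]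
    · right; simp [h]
  · intro k
    have : {ω : Fin r → Bool | (if ω k then (1:ℝ) else -1) = 1}
        = (fun ω : Fin r → Bool => ω k) ⁻¹' {true} := by
      ext ω
      by_cases h : ω k <;> simp [h] <;> norm_num
    rw [this, NMFLB.mu_eval, NMFLB.nu_singleton]
  · exact NMFLB.indep_eps r _ (fun k => rfl)
  · intro Z
    have habs : ∀ (k : Fin r) (ω : Fin r → Bool), |(if ω k then (1:ℝ) else -1)| = 1 := by
      intro k ω; by_cases h : ω k <;> simp [h]
    have hZsum : ∀ ω : Fin r → Bool, matrixNuclearNorm (∑ k, Z k ω) = (r : ℝ) := by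
      intro ω
      rw [NMFLB.nuclearNorm_sum_std hginj hg'inj]
      simp only [habs]
      simp
    have hZone : ∀ (k : Fin r) (ω : Fin r → Bool), matrixNuclearNorm (Z k ω) = 1 := by
      intro k ω
      have : Z k ω = ∑ j, (Pi.single (M := fun _ => ℝ) k (if ω k then (1:ℝ) else -1) j) •
          Matrix.single (g j) (g' j) (1:ℝ) := by
        rw [Finset.sum_eq_single k]
        · simp [Z]
        · intro b _ hb; simp [Pi.single_eq_of_ne hb]
        · simp
      rw [this, NMFLB.nuclearNorm_sum_std hginj hg'inj]
      rw [Finset.sum_eq_single k]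
      · simp [habs]
      · intro b _ hb; simp [Pi.single_eq_of_ne hb]
      · simp
    have hp0 : p ≠ 0 := by positivity
    have hrpos : (0:ℝ) < (r:ℝ) := by
      have : 1 ≤ r := le_min hm hn
      exact_mod_cast Nat.lt_of_lt_of_le Nat.zero_lt_one this
    have hsum : ∀ ω : Fin r → Bool,
        (∑ k, matrixNuclearNorm (Z k ω) ^ p) ^ (1 / p) = (r : ℝ) ^ ((1:ℝ) / p) := by
      intro ω
      congr 1
      simp only [hZone, Real.one_rpow]
      rw [Finset.sum_const, Finset.card_univ, Fintype.card_fin, nsmul_eq_mul, mul_one]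
    have hI1 : (∫ ω, matrixNuclearNorm (∑ k, Z k ω) ∂(NMFLB.mu r)) = (r : ℝ) := by
      simp only [hZsum]
      simp
    have hI2 : (∫ ω, (∑ k, matrixNuclearNorm (Z k ω) ^ p) ^ (1 / p) ∂(NMFLB.mu r))
        = (r : ℝ) ^ ((1:ℝ) / p) := by
      simp only [hsum]
      simp
    simp only [← Nat.cast_min]
    refine ⟨hI1, hI2, ?_⟩
    rw [hI1, hI2]
    rw [← Real.rpow_add hrpos]
    have hexp : (1 - 1/p) + 1/p = 1 := by ring
    rw [hexp, Real.rpow_one]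
end
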